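/- arXiv:math/0009190 — 2 statements merged into one kernel-verified Lean document; each statement's English description precedes it below -/
import Mathlib

section
/- Let P(t,z) = Σ over multi-indices k of (x^k/k!)·t^{a·k}·∏_{i=0}^{b·k−1}(c·k + z + t − i), where each index i has data (aᵢ,bᵢ) ∈ {(0,0),(1,0),(0,1)} and cᵢ ∈ ℝ, in finitely many variables x₁,…,x_n. In the special case where all cᵢ = 0, P factors as P(t,z) = R(t)·S(z,t) with R(t) = exp(Σ_{i: aᵢ=1} xᵢ·t + Σ_{i: aᵢ=bᵢ=0} xᵢ) and S(z,t) = (1 + Σ_{i: bᵢ=1} xᵢ)^{z+t}, and consequently ∂_t² ln P = ∂_z² ln P = ∂_t∂_z ln P = 0. -/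
/-!
With `yᵢ = xᵢ t^{aᵢ}` and `w = z + t`, the summand of `P` is `∏ yᵢ^{kᵢ}/kᵢ! · w(w-1)⋯(w-M+1)`
where `M = Σ_{bᵢ=1} kᵢ`. The indices with `bᵢ = 0` decouple and contribute `exp(Σ_{bᵢ=0} yᵢ)`.
Grouping the remaining absolutely convergent sum by `M`, the multinomial theorem turns it into
the binomial series `Σ_M (w choose M) Y^M = (1 + Y)^w` with `Y = Σ_{bᵢ=1} xᵢ`. Hence `ln P` is
affine in `(t, z)`.
-/

/-- The multi-index sum `P(t,z)` of Lemma A.1 in the case `c = 0`. -/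
noncomputable def stmt9P (n : ℕ) (a b : Fin n → ℕ) (x : Fin n → ℝ) (t z : ℝ) : ℝ :=
  ∑' k : Fin n → ℕ,
    (∏ i, x i ^ k i) / (∏ i, (Nat.factorial (k i) : ℝ)) *
      t ^ (∑ i, a i * k i) * ∏ j ∈ Finset.range (∑ i, b i * k i), (z + t - j)

open Finset
open scoped Nat

section Multinomial

variable {ι : Type*} [Fintype ι]

theorem preimage_sum_singleton_eq_piAntidiag [DecidableEq ι] (M : ℕ) :
    (fun k : ι → ℕ => ∑ i, k i) ⁻¹' {M} = (piAntidiag univ M : Finset (ι → ℕ)) := by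
  ext k
  simp [mem_piAntidiag]

theorem sum_piAntidiag_prod_pow_div_factorial [DecidableEq ι] (y : ι → ℝ) (M : ℕ) :
    ∑ k ∈ piAntidiag univ M, ∏ i, y i ^ k i / (k i)! = (∑ i, y i) ^ M / M ! := by
  rw [sum_pow_eq_sum_piAntidiag, sum_div]
  refine sum_congr rfl fun k hk => ?_
  have hM : (M ! : ℝ) = (∏ i, ((k i)! : ℝ)) * Nat.multinomial univ k := by
    rw [← (mem_piAntidiag.mp hk).1]
    exact_mod_cast (Nat.multinomial_spec univ k).symm
  rw [hM, prod_div_distrib]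
  have : (Nat.multinomial univ k : ℝ) ≠ 0 := by exact_mod_cast (Nat.multinomial_pos univ k).ne'
  have : (∏ i, ((k i)! : ℝ)) ≠ 0 := prod_ne_zero_iff.mpr fun i _ => by positivity
  field_simp

theorem hasSum_fiber_prod_pow_div_factorial_mul (y : ι → ℝ) (f : ℕ → ℝ) (M : ℕ) :
    HasSum (fun k : (fun k : ι → ℕ => ∑ i, k i) ⁻¹' {M} =>
        (∏ i, y i ^ k.1 i / (k.1 i)!) * f (∑ i, k.1 i))
      (f M * (∑ i, y i) ^ M / M !) := by
  classical
  have hk : ∀ k : (fun k : ι → ℕ => ∑ i, k i) ⁻¹' {M}, ∑ i, k.1 i = M := fun k => k.2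
  simp only [hk]
  rw [preimage_sum_singleton_eq_piAntidiag, mul_div_assoc, mul_comm (f M),
    ← sum_piAntidiag_prod_pow_div_factorial, sum_mul]
  exact (piAntidiag univ M).hasSum fun k => (∏ i, y i ^ k i / (k i)!) * f M

theorem summable_norm_prod_pow_div_factorial_mul (y : ι → ℝ) (f : ℕ → ℝ)
    (hf : Summable fun M => |f M| * (∑ i, |y i|) ^ M / M !) :
    Summable fun k : ι → ℕ => ‖(∏ i, y i ^ k i / (k i)!) * f (∑ i, k i)‖ := by
  simp only [Real.norm_eq_abs, abs_mul, abs_prod, abs_div, abs_pow, Nat.abs_cast]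
  rw [← (Equiv.sigmaFiberEquiv fun k : ι → ℕ => ∑ i, k i).summable_iff,
    summable_sigma_of_nonneg fun _ => by dsimp only [Function.comp_apply]; positivity]
  refine ⟨fun M => (hasSum_fiber_prod_pow_div_factorial_mul (|y ·|) (|f ·|) M).summable, ?_⟩
  exact hf.congr fun M => (hasSum_fiber_prod_pow_div_factorial_mul (|y ·|) (|f ·|) M).tsum_eq.symm

theorem hasSum_prod_pow_div_factorial_mul (y : ι → ℝ) (f : ℕ → ℝ)
    (hf : Summable fun M => |f M| * (∑ i, |y i|) ^ M / M !) {s : ℝ}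
    (hs : HasSum (fun M => f M * (∑ i, y i) ^ M / M !) s) :
    HasSum (fun k : ι → ℕ => (∏ i, y i ^ k i / (k i)!) * f (∑ i, k i)) s := by
  have hsum := (summable_norm_prod_pow_div_factorial_mul y f hf).of_norm.hasSum
  have hfiber : HasSum (fun M => f M * (∑ i, y i) ^ M / M !) _ :=
    (hsum.tsum_fiberwise fun k : ι → ℕ => ∑ i, k i).congr_fun fun M =>
      (hasSum_fiber_prod_pow_div_factorial_mul y f M).tsum_eq.symm
  exact hs.unique hfiber ▸ hsum

theorem hasSum_prod_pow_div_factorial (y : ι → ℝ) :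
    HasSum (fun k : ι → ℕ => ∏ i, y i ^ k i / (k i)!) (Real.exp (∑ i, y i)) := by
  have hexp : HasSum (fun M => 1 * (∑ i, y i) ^ M / M !) (Real.exp (∑ i, y i)) := by
    simpa only [one_mul, Real.exp_eq_exp_ℝ] using NormedSpace.expSeries_div_hasSum_exp _
  simpa using hasSum_prod_pow_div_factorial_mul y (fun _ => 1)
    (by simpa using Real.summable_pow_div_factorial _) hexp

theorem summable_norm_prod_pow_div_factorial (y : ι → ℝ) :
    Summable fun k : ι → ℕ => ‖∏ i, y i ^ k i / (k i)!‖ := by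
  simpa using summable_norm_prod_pow_div_factorial_mul y (fun _ => 1)
    (by simpa using Real.summable_pow_div_factorial _)

theorem hasSum_prod_pow_div_factorial_mul_filter (p : ι → Prop) [DecidablePred p] (y : ι → ℝ)
    (f : ℕ → ℝ) (hf : Summable fun M => |f M| * (∑ i ∈ univ.filter p, |y i|) ^ M / M !)
    {s : ℝ} (hs : HasSum (fun M => f M * (∑ i ∈ univ.filter p, y i) ^ M / M !) s) :
    HasSum (fun k : ι → ℕ => (∏ i, y i ^ k i / (k i)!) * f (∑ i ∈ univ.filter p, k i))
      (s * Real.exp (∑ i ∈ univ.filter (fun i => ¬ p i), y i)) := by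
  have hsub : ∀ (q : ι → Prop) [DecidablePred q] {R : Type} [AddCommMonoid R] (g : ι → R),
      ∑ i ∈ univ.filter q, g i = ∑ i : Subtype q, g i := fun _ _ _ _ g =>
    sum_subtype _ (fun _ => by simp) g
  simp only [hsub] at hf hs ⊢
  have hsum := hasSum_prod_pow_div_factorial_mul _ f hf hs
  have hexp := hasSum_prod_pow_div_factorial fun i : {i // ¬ p i} => y i
  have hsum_norm := summable_norm_prod_pow_div_factorial_mul _ f hf
  have hexp_norm := summable_norm_prod_pow_div_factorial fun i : {i // ¬ p i} => y i
  have hsummable := summable_mul_of_summable_norm hsum_norm hexp_norm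
  have hprod := hsum.mul hexp hsummable
  rw [← (Equiv.piEquivPiSubtypeProd p fun _ => ℕ).symm.hasSum_iff]
  refine hprod.congr_fun fun k => ?_
  simp only [Function.comp_apply, Equiv.piEquivPiSubtypeProd_symm_apply]
  rw [← Fintype.prod_subtype_mul_prod_subtype p]
  have h1 : ∀ i : Subtype p, p i := Subtype.prop
  have h0 : ∀ i : {i // ¬ p i}, ¬ p i := Subtype.prop
  simp only [h1, h0, dite_true, dite_false]
  ring

end Multinomial

theorem Ring.choose_eq_prod_range_sub_div_factorial {K : Type*} [Field K] [CharZero K] (w : K)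
    (m : ℕ) :
    Ring.choose w m = (∏ j ∈ range m, (w - j)) / m ! := by
  rw [Ring.choose_eq_smul, ← Polynomial.aeval_eq_smeval, ← Polynomial.eval_map_algebraMap,
    descPochhammer_map, descPochhammer_eval_eq_prod_range, smul_eq_mul, inv_mul_eq_div]

theorem hasSum_prod_range_sub_mul_pow_div_factorial (w : ℝ) {X : ℝ} (hX : |X| < 1) :
    HasSum (fun m => (∏ j ∈ range m, (w - j)) * X ^ m / m !) ((1 + X) ^ w) := by
  have := (Real.one_add_rpow_hasFPowerSeriesOnBall_zero (a := w)).hasSum (y := X)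
    (by simpa [Metric.eball_ofReal, ← ENNReal.ofReal_one] using hX)
  simp only [zero_add, binomialSeries_apply, List.ofFn_const, List.prod_replicate,
    Ring.choose_eq_prod_range_sub_div_factorial, smul_eq_mul] at this
  exact this.congr_fun fun m => by ring

theorem summable_abs_prod_range_sub_mul_pow_div_factorial (w : ℝ) {ρ : ℝ} (hρ₀ : 0 ≤ ρ)
    (hρ : ρ < 1) : Summable fun m => |∏ j ∈ range m, (w - j)| * ρ ^ m / m ! := by
  have hr : (ρ.toNNReal : ENNReal) < (binomialSeries ℝ w).radius :=
    lt_of_lt_of_le (by simpa using hρ) binomialSeries_radius_ge_one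
  have := (binomialSeries ℝ w).summable_norm_mul_pow hr
  simp only [binomialSeries, FormalMultilinearSeries.ofScalars_norm, Real.norm_eq_abs,
    Ring.choose_eq_prod_range_sub_div_factorial, Real.coe_toNNReal _ hρ₀, abs_div,
    Nat.abs_cast] at this
  exact this.congr fun m => by ring

theorem sum_mul_eq_sum_filter_eq_one {ι : Type*} [Fintype ι] {b : ι → ℕ}
    (hb : ∀ i, b i = 0 ∨ b i = 1) (k : ι → ℕ) :
    ∑ i, b i * k i = ∑ i ∈ univ.filter (fun i => b i = 1), k i := by
  rw [sum_filter]
  refine sum_congr rfl fun i _ => ?_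
  rcases hb i with h | h <;> simp [h]

theorem stmt9P_eq_tsum (n : ℕ) (a b : Fin n → ℕ) (x : Fin n → ℝ) (hb : ∀ i, b i = 0 ∨ b i = 1)
    (t z : ℝ) :
    stmt9P n a b x t z = ∑' k : Fin n → ℕ, (∏ i, (x i * t ^ a i) ^ k i / (k i)!) *
      ∏ j ∈ range (∑ i ∈ univ.filter (fun i => b i = 1), k i), (z + t - j) := by
  refine tsum_congr fun k => ?_
  rw [sum_mul_eq_sum_filter_eq_one hb, prod_div_distrib, ← prod_pow_eq_pow_sum]
  simp only [mul_pow, ← pow_mul, prod_mul_distrib]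
  ring

theorem stmt9P_eq_rpow_mul_exp (n : ℕ) (a b : Fin n → ℕ) (x : Fin n → ℝ)
    (hab : ∀ i, (a i, b i) = (0, 0) ∨ (a i, b i) = (1, 0) ∨ (a i, b i) = (0, 1))
    (hx : ∑ i ∈ univ.filter (fun i => b i = 1), |x i| < 1) (t z : ℝ) :
    stmt9P n a b x t z = (1 + ∑ i ∈ univ.filter (fun i => b i = 1), x i) ^ (z + t) *
      Real.exp ((∑ i ∈ univ.filter (fun i => a i = 1), x i) * t +
        ∑ i ∈ univ.filter (fun i => a i = 0 ∧ b i = 0), x i) := by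
  simp only [Prod.ext_iff] at hab
  have hb : ∀ i, b i = 0 ∨ b i = 1 := by grind
  have ha : ∀ i, b i = 1 → a i = 0 := by grind
  have hy : ∀ i ∈ univ.filter (fun i => b i = 1), x i * t ^ a i = x i := fun i hi => by
    rw [ha i (mem_filter.mp hi).2, pow_zero, mul_one]
  have hy_abs : ∀ i ∈ univ.filter (fun i => b i = 1), |x i * t ^ a i| = |x i| := fun i hi => by
    rw [hy i hi]
  have hexp : ∑ i ∈ univ.filter (fun i => ¬ b i = 1), x i * t ^ a i =
      (∑ i ∈ univ.filter (fun i => a i = 1), x i) * t +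
        ∑ i ∈ univ.filter (fun i => a i = 0 ∧ b i = 0), x i := by
    simp only [sum_filter, sum_mul, ← sum_add_distrib]
    refine sum_congr rfl fun i _ => ?_
    rcases hab i with h | h | h <;> simp [h]
  rw [stmt9P_eq_tsum n a b x hb, ← hexp, ← sum_congr rfl hy]
  refine (hasSum_prod_pow_div_factorial_mul_filter (fun i => b i = 1) (fun i => x i * t ^ a i)
    (fun M => ∏ j ∈ range M, (z + t - j)) ?_ ?_).tsum_eq
  · rw [sum_congr rfl hy_abs]
    exact summable_abs_prod_range_sub_mul_pow_div_factorial _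
      (sum_nonneg fun _ _ => abs_nonneg _) hx
  · exact hasSum_prod_range_sub_mul_pow_div_factorial _ ((abs_sum_le_sum_abs _ _).trans_lt
      ((sum_congr rfl hy_abs).trans_lt hx))

theorem stmt_9_general (n : ℕ) (a b : Fin n → ℕ) (x : Fin n → ℝ)
    (hab : ∀ i, (a i, b i) = (0, 0) ∨ (a i, b i) = (1, 0) ∨ (a i, b i) = (0, 1))
    (hx' : ∑ i ∈ univ.filter (fun i => b i = 1), |x i| < 1) :
    (∀ t z : ℝ, stmt9P n a b x t z =
      Real.exp ((∑ i ∈ univ.filter (fun i => a i = 1), x i) * t +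
          ∑ i ∈ univ.filter (fun i => a i = 0 ∧ b i = 0), x i) *
        Real.exp ((z + t) *
          Real.log (1 + ∑ i ∈ univ.filter (fun i => b i = 1), x i))) ∧
    (∀ t z : ℝ,
      deriv (fun s => deriv (fun s' => Real.log (stmt9P n a b x s' z)) s) t = 0) ∧
    (∀ t z : ℝ,
      deriv (fun s => deriv (fun s' => Real.log (stmt9P n a b x t s')) s) z = 0) ∧
    (∀ t z : ℝ,
      deriv (fun s => deriv (fun s' => Real.log (stmt9P n a b x s s')) z) t = 0) := by
  set X := ∑ i ∈ univ.filter (fun i => b i = 1), x i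
  set α := ∑ i ∈ univ.filter (fun i => a i = 1), x i
  set β := ∑ i ∈ univ.filter (fun i => a i = 0 ∧ b i = 0), x i
  set L := Real.log (1 + X)
  have hX : 0 < 1 + X := by
    linarith [neg_abs_le X, (abs_sum_le_sum_abs x _).trans_lt hx']
  have hP : ∀ t z, stmt9P n a b x t z = Real.exp (α * t + β) * Real.exp ((z + t) * L) := by
    intro t z
    rw [stmt9P_eq_rpow_mul_exp n a b x hab hx', Real.rpow_def_of_pos hX, mul_comm, mul_comm L]
  have hlog : ∀ t z, Real.log (stmt9P n a b x t z) = (α + L) * t + L * z + β := by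
    intro t z
    rw [hP, Real.log_mul (Real.exp_ne_zero _) (Real.exp_ne_zero _), Real.log_exp, Real.log_exp]
    ring
  refine ⟨hP, ?_, ?_, ?_⟩ <;> intro t z <;> simp only [hlog] <;>
    simp [deriv_add_const, deriv_const_add]

/-- in the case `c = 0`, `P(t,z)` factors as
`exp(Σ_{aᵢ=1} xᵢ·t + Σ_{aᵢ=bᵢ=0} xᵢ) · (1+Σ_{bᵢ=1} xᵢ)^{z+t}`, and consequently all
second logarithmic derivatives of `P` vanish. -/
theorem stmt_9 (n : ℕ) (a b : Fin n → ℕ) (x : Fin n → ℝ)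
    (hab : ∀ i, (a i, b i) = (0, 0) ∨ (a i, b i) = (1, 0) ∨ (a i, b i) = (0, 1))
    (hx : -1 < ∑ i ∈ univ.filter (fun i => b i = 1), x i)
    (hx' : ∑ i ∈ univ.filter (fun i => b i = 1), |x i| < 1) :
    (∀ t z : ℝ, stmt9P n a b x t z =
      Real.exp ((∑ i ∈ univ.filter (fun i => a i = 1), x i) * t +
          ∑ i ∈ univ.filter (fun i => a i = 0 ∧ b i = 0), x i) *
        Real.exp ((z + t) *
          Real.log (1 + ∑ i ∈ univ.filter (fun i => b i = 1), x i))) ∧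
    (∀ t z : ℝ,
      deriv (fun s => deriv (fun s' => Real.log (stmt9P n a b x s' z)) s) t = 0) ∧
    (∀ t z : ℝ,
      deriv (fun s => deriv (fun s' => Real.log (stmt9P n a b x t s')) s) z = 0) ∧
    (∀ t z : ℝ,
      deriv (fun s => deriv (fun s' => Real.log (stmt9P n a b x s s')) z) t = 0) :=
  stmt_9_general n a b x hab hx'
end

section
/- Let P ∈ R[[t]] be a formal power series over a commutative ℚ-algebra R with constant term 1, and suppose P·P'' = (P')² (formal derivative). Then P = exp(c·t) := Σ_{n≥0} cⁿtⁿ/n! where c ∈ R is the linear coefficient of P. -/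
/-!
The hypothesis `P·P'' = (P')²` says that the logarithmic derivative `P'/P` has derivative zero,
so over a ring without additive torsion it is the constant `c = P'(0) = coeff 1 P`. Hence
`P' = c·P`, and then `P·e^{-ct}` has derivative zero and constant term `1`, so `P = e^{ct}`.
-/

open PowerSeries

namespace PowerSeries

variable {R : Type*} [CommRing R]

theorem constantCoeff_derivative (f : R⟦X⟧) : constantCoeff (d⁄dX R f) = coeff 1 f := by
  simp [← coeff_zero_eq_constantCoeff_apply, coeff_derivative]

theorem derivative_rescale (r : R) (f : R⟦X⟧) :
    d⁄dX R (rescale r f) = C r * rescale r (d⁄dX R f) := by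
  ext n
  simp only [coeff_derivative, coeff_rescale, coeff_C_mul]
  ring

theorem eq_C_of_derivative_eq_zero [IsAddTorsionFree R] {f : R⟦X⟧} (hf : d⁄dX R f = 0) :
    f = C (constantCoeff f) :=
  derivative.ext (by rw [hf, derivative_C]) (by rw [constantCoeff_C])

theorem derivative_derivative_mul_inv (u : R⟦X⟧ˣ) :
    d⁄dX R (d⁄dX R u * ↑u⁻¹) =
      ↑u⁻¹ ^ 2 * ((u : R⟦X⟧) * d⁄dX R (d⁄dX R u) - d⁄dX R u ^ 2) := by
  rw [Derivation.leibniz, derivative_inv, smul_eq_mul, smul_eq_mul]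
  linear_combination (-(↑u⁻¹ : R⟦X⟧) * d⁄dX R (d⁄dX R u)) * u.inv_mul

/-- The logarithmic derivative of a unit solving `u·u'' = (u')²` is constant. -/
theorem derivative_eq_C_mul_of_mul_derivative_derivative_eq_sq [IsAddTorsionFree R]
    (u : R⟦X⟧ˣ) (hu : (u : R⟦X⟧) * d⁄dX R (d⁄dX R u) = d⁄dX R u ^ 2) :
    d⁄dX R u = C (constantCoeff (d⁄dX R u * (↑u⁻¹ : R⟦X⟧))) * u := by
  have hlog : d⁄dX R (d⁄dX R u * ↑u⁻¹) = 0 := by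
    rw [derivative_derivative_mul_inv, hu, sub_self, mul_zero]
  rw [← eq_C_of_derivative_eq_zero hlog, mul_assoc, u.inv_mul, mul_one]

variable [Algebra ℚ R]

theorem derivative_rescale_exp (c : R) :
    d⁄dX R (rescale c (exp R)) = C c * rescale c (exp R) := by
  rw [derivative_rescale, derivative_exp]

theorem eq_C_mul_rescale_exp_of_derivative_eq_C_mul {f : R⟦X⟧} {c : R}
    (hf : d⁄dX R f = C c * f) : f = C (constantCoeff f) * rescale c (exp R) := by
  have := IsAddTorsionFree.of_module_rat R
  have hinv : rescale (-c) (exp R) * rescale c (exp R) = 1 := by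
    rw [exp_mul_exp_eq_exp_add, neg_add_cancel, rescale_zero, RingHom.comp_apply,
      constantCoeff_exp, map_one]
  have hconst : d⁄dX R (f * rescale (-c) (exp R)) = 0 := by
    rw [Derivation.leibniz, derivative_rescale_exp, hf, smul_eq_mul, smul_eq_mul, map_neg]
    ring
  calc f = f * rescale (-c) (exp R) * rescale c (exp R) := by rw [mul_assoc, hinv, mul_one]
    _ = C (constantCoeff f) * rescale c (exp R) := by
      rw [eq_C_of_derivative_eq_zero hconst, map_mul, ← coeff_zero_eq_constantCoeff_apply
        (rescale _ _), coeff_rescale, coeff_zero_eq_constantCoeff, constantCoeff_exp, pow_zero,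
        mul_one, mul_one]

end PowerSeries

/-- a formal power series `P` over a commutative `ℚ`-algebra with
constant term `1` and `P·P'' = (P')²` equals `exp(c·t) = Σ cⁿtⁿ/n!`, where `c` is
its linear coefficient (`rescale c exp` is the series `Σ cⁿ Xⁿ/n!`). -/
theorem stmt_18 (R : Type*) [CommRing R] [Algebra ℚ R] (P : R⟦X⟧)
    (hP0 : constantCoeff P = 1)
    (hode : P * d⁄dX R (d⁄dX R P) = (d⁄dX R P) ^ 2) :
    P = rescale (coeff 1 P) (PowerSeries.exp R) := by
  have := IsAddTorsionFree.of_module_rat R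
  obtain ⟨u, rfl⟩ : IsUnit P := by rw [isUnit_iff_constantCoeff, hP0]; exact isUnit_one
  have hu0 : constantCoeff (↑u⁻¹ : R⟦X⟧) = 1 := by
    have h := congrArg constantCoeff u.inv_mul
    rwa [map_mul, hP0, mul_one, map_one] at h
  have hlin := derivative_eq_C_mul_of_mul_derivative_derivative_eq_sq u hode
  rw [map_mul, hu0, mul_one, constantCoeff_derivative] at hlin
  have hexp := eq_C_mul_rescale_exp_of_derivative_eq_C_mul hlin
  rwa [hP0, map_one, one_mul] at hexp
end
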